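/- arXiv:2510.07470 — 3 statements merged into one kernel-verified Lean document; each statement's English description precedes it below -/
import Mathlib

section
/- (Average gradient bound along a heavy-ball trajectory without restart.) Let F : ℝ^d → ℝ be continuously differentiable, α > 0, T_max > 0, B ≥ 0, and let x : [0,∞) → ℝ^d be twice differentiable and solve the heavy-ball ODE ẍ_t + α·ẋ_t + ∇F(x_t) = 0 for all t ≥ 0, with ẋ_0 = 0. Assume that for every T ∈ [0, T_max], T·∫₀ᵀ ‖ẋ_t‖² dt ≤ B². Let K₀ ∈ [T_max/2, T_max] be a minimizer of t ↦ ‖ẋ_t‖ over [T_max/2, T_max] (i.e. ‖ẋ_{K₀}‖ ≤ ‖ẋ_t‖ for all t in this interval). Then ‖(1/K₀)·∫₀^{K₀} ∇F(x_s) ds‖ ≤ 2√2·B/T_max² + 2·α·B/T_max. -/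
/-!
Integrating the heavy-ball equation over `[0, K₀]` and using `ẋ₀ = 0` gives
`∫₀^{K₀} ∇F(x_s) ds = -ẋ_{K₀} - α ∫₀^{K₀} ẋ_s ds`. By Cauchy–Schwarz and the no-restart bound at
`T = K₀`, the displacement `‖∫₀^{K₀} ẋ‖` is at most `B`. Since `K₀` minimises `‖ẋ‖` on
`[Tmax/2, Tmax]`, `(Tmax/2) ‖ẋ_{K₀}‖² ≤ ∫₀^{Tmax} ‖ẋ‖² ≤ B²/Tmax`. Dividing by `K₀ ≥ Tmax/2`
gives the bound.
-/

open MeasureTheory Set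

theorem ContDiff.continuous_gradient {H : Type*} [NormedAddCommGroup H] [InnerProductSpace ℝ H]
    [CompleteSpace H] {f : H → ℝ} {n : WithTop ℕ∞} (hf : ContDiff ℝ n f) (hn : n ≠ 0) :
    Continuous (gradient f) :=
  (InnerProductSpace.toDual ℝ H).symm.continuous.comp (hf.continuous_fderiv hn)

theorem sq_intervalIntegral_le_mul_intervalIntegral_sq {f : ℝ → ℝ} {a b : ℝ} (hab : a ≤ b)
    (hf : IntervalIntegrable f volume a b)
    (hf2 : IntervalIntegrable (fun t => f t ^ 2) volume a b) :
    (∫ t in a..b, f t) ^ 2 ≤ (b - a) * ∫ t in a..b, f t ^ 2 := by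
  obtain rfl | hlt := hab.eq_or_lt
  · simp
  set I := ∫ t in a..b, f t
  have hexpand : ∫ t in a..b, ((b - a) * f t - I) ^ 2
      = (b - a) * ((b - a) * (∫ t in a..b, f t ^ 2) - I ^ 2) := by
    calc ∫ t in a..b, ((b - a) * f t - I) ^ 2
        = ∫ t in a..b, ((b - a) ^ 2 * f t ^ 2 - (2 * (b - a) * I) * f t + I ^ 2) :=
          intervalIntegral.integral_congr fun t _ => by ring
      _ = (b - a) ^ 2 * (∫ t in a..b, f t ^ 2) - 2 * (b - a) * I * I + (b - a) * I ^ 2 := by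
          rw [intervalIntegral.integral_add ((hf2.const_mul _).sub (hf.const_mul _))
              intervalIntegrable_const,
            intervalIntegral.integral_sub (hf2.const_mul _) (hf.const_mul _),
            intervalIntegral.integral_const_mul, intervalIntegral.integral_const_mul,
            intervalIntegral.integral_const, smul_eq_mul]
      _ = (b - a) * ((b - a) * (∫ t in a..b, f t ^ 2) - I ^ 2) := by ring
  have hnonneg : 0 ≤ ∫ t in a..b, ((b - a) * f t - I) ^ 2 :=
    intervalIntegral.integral_nonneg hab fun _ _ => sq_nonneg _
  rw [hexpand, mul_nonneg_iff_of_pos_left (sub_pos.2 hlt)] at hnonneg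
  linarith

theorem mul_le_intervalIntegral_of_le_on_right {f : ℝ → ℝ} {a c b m : ℝ} (hac : a ≤ c)
    (hcb : c ≤ b) (hf : ContinuousOn f (Icc a b)) (hf0 : ∀ t ∈ Icc a b, 0 ≤ f t)
    (hm : ∀ t ∈ Icc c b, m ≤ f t) :
    (b - c) * m ≤ ∫ t in a..b, f t := by
  have hf0' : 0 ≤ᵐ[volume.restrict (Ioc a b)] f :=
    (ae_restrict_iff' measurableSet_Ioc).2 (ae_of_all _ fun t ht => hf0 t (Ioc_subset_Icc_self ht))
  calc (b - c) * m = ∫ _ in c..b, m := by simp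
    _ ≤ ∫ t in c..b, f t :=
      intervalIntegral.integral_mono_on hcb intervalIntegrable_const
        ((hf.mono (Icc_subset_Icc_left hac)).intervalIntegrable_of_Icc hcb) hm
    _ ≤ ∫ t in a..b, f t :=
      intervalIntegral.integral_mono_interval hac hcb le_rfl hf0'
        (hf.intervalIntegrable_of_Icc (hac.trans hcb))

section VectorValued

variable {E : Type*} [NormedAddCommGroup E]

theorem norm_le_of_isMinOn_of_mul_integral_norm_sq_le {v : ℝ → E} {T B K : ℝ} (hT : 0 < T)
    (hv : ContinuousOn v (Icc 0 T)) (hB : 0 ≤ B)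
    (hK : IsMinOn (fun t => ‖v t‖) (Icc (T / 2) T) K)
    (henergy : T * ∫ t in 0..T, ‖v t‖ ^ 2 ≤ B ^ 2) :
    ‖v K‖ ≤ Real.sqrt 2 * B / T := by
  have hhalf : (T - T / 2) * ‖v K‖ ^ 2 ≤ ∫ t in 0..T, ‖v t‖ ^ 2 :=
    mul_le_intervalIntegral_of_le_on_right (by positivity) (by linarith) (hv.norm.pow 2)
      (fun _ _ => by positivity) fun t ht =>
        pow_le_pow_left₀ (norm_nonneg _) (isMinOn_iff.1 hK t ht) 2
  have hsq : (Real.sqrt 2 * B / T) ^ 2 = 2 * B ^ 2 / T ^ 2 := by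
    rw [div_pow, mul_pow, Real.sq_sqrt zero_le_two]
  refine le_of_pow_le_pow_left₀ two_ne_zero (by positivity) ?_
  rw [hsq, le_div_iff₀ (by positivity)]
  nlinarith

variable [NormedSpace ℝ E]

theorem norm_intervalIntegral_le_of_mul_integral_norm_sq_le {v : ℝ → E} {a b B : ℝ} (hab : a ≤ b)
    (hv : ContinuousOn v (Icc a b)) (hB : 0 ≤ B)
    (henergy : (b - a) * ∫ t in a..b, ‖v t‖ ^ 2 ≤ B ^ 2) :
    ‖∫ t in a..b, v t‖ ≤ B := by
  have hnorm : ContinuousOn (fun t => ‖v t‖) (Icc a b) := hv.norm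
  have hcs := sq_intervalIntegral_le_mul_intervalIntegral_sq hab
    (hnorm.intervalIntegrable_of_Icc hab) ((hnorm.pow 2).intervalIntegrable_of_Icc hab)
  calc ‖∫ t in a..b, v t‖ ≤ ∫ t in a..b, ‖v t‖ :=
        intervalIntegral.norm_integral_le_integral_norm hab
    _ ≤ B := le_of_pow_le_pow_left₀ two_ne_zero hB (hcs.trans henergy)

variable [CompleteSpace E]

theorem integral_eq_of_damped_ode {v v' g : ℝ → E} {α a b : ℝ} (hab : a ≤ b)
    (hv : ∀ t ∈ Icc a b, HasDerivAt v (v' t) t)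
    (hode : ∀ t ∈ Icc a b, v' t + α • v t + g t = 0) (hg : ContinuousOn g (Icc a b)) :
    ∫ t in a..b, g t = v a - v b - α • ∫ t in a..b, v t := by
  have hvc : ContinuousOn v (Icc a b) := fun t ht => (hv t ht).continuousAt.continuousWithinAt
  have hg_eq : EqOn g (fun t => -v' t - α • v t) (Icc a b) := fun t ht => by
    rw [eq_neg_of_add_eq_zero_right (hode t ht), neg_add']
  have hv'c : ContinuousOn v' (Icc a b) :=
    ((hvc.const_smul α).add hg).neg.congr fun t ht =>
      eq_neg_of_add_eq_zero_left (by rw [Pi.add_apply, Pi.smul_apply, ← add_assoc]; exact hode t ht)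
  have hftc : ∫ t in a..b, v' t = v b - v a :=
    intervalIntegral.integral_eq_sub_of_hasDerivAt (by rwa [uIcc_of_le hab])
      (hv'c.intervalIntegrable_of_Icc hab)
  rw [intervalIntegral.integral_congr (by rwa [uIcc_of_le hab]),
    intervalIntegral.integral_sub (f := fun t => -v' t) (g := fun t => α • v t)
      (hv'c.intervalIntegrable_of_Icc hab).neg
      ((hvc.intervalIntegrable_of_Icc hab).smul α),
    intervalIntegral.integral_neg, intervalIntegral.integral_smul, hftc, neg_sub]

end VectorValued

theorem heavy_ball_average_gradient_bound_general
    {d : ℕ}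
    (F : EuclideanSpace ℝ (Fin d) → ℝ) (hF : ContDiff ℝ 1 F)
    (α Tmax B : ℝ) (hα : 0 < α) (hTmax : 0 < Tmax) (hB : 0 ≤ B)
    (x v a : ℝ → EuclideanSpace ℝ (Fin d))
    (hx : ∀ t : ℝ, 0 ≤ t → HasDerivAt x (v t) t)
    (hv : ∀ t : ℝ, 0 ≤ t → HasDerivAt v (a t) t)
    (hode : ∀ t : ℝ, 0 ≤ t → a t + α • v t + gradient F (x t) = 0)
    (hv0 : v 0 = 0)
    (hnorestart : ∀ T : ℝ, 0 ≤ T → T ≤ Tmax →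
      T * ∫ t in (0 : ℝ)..T, ‖v t‖ ^ 2 ≤ B ^ 2)
    (K₀ : ℝ) (hK₀lb : Tmax / 2 ≤ K₀) (hK₀ub : K₀ ≤ Tmax)
    (hK₀min : ∀ t : ℝ, Tmax / 2 ≤ t → t ≤ Tmax → ‖v K₀‖ ≤ ‖v t‖) :
    ‖K₀⁻¹ • ∫ s in (0 : ℝ)..K₀, gradient F (x s)‖ ≤
      2 * Real.sqrt 2 * B / Tmax ^ 2 + 2 * α * B / Tmax := by
  have hK₀ : 0 < K₀ := by linarith
  have hxc : ContinuousOn x (Ici 0) := fun t ht => (hx t ht).continuousAt.continuousWithinAt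
  have hvc : ContinuousOn v (Ici 0) := fun t ht => (hv t ht).continuousAt.continuousWithinAt
  have hmean : ∫ s in (0 : ℝ)..K₀, gradient F (x s) = -v K₀ - α • ∫ s in (0 : ℝ)..K₀, v s := by
    rw [integral_eq_of_damped_ode hK₀.le (fun t ht => hv t ht.1) (fun t ht => hode t ht.1)
      ((hF.continuous_gradient one_ne_zero).comp_continuousOn (hxc.mono Icc_subset_Ici_self)),
      hv0, zero_sub]
  have hvK₀ : ‖v K₀‖ ≤ Real.sqrt 2 * B / Tmax :=
    norm_le_of_isMinOn_of_mul_integral_norm_sq_le hTmax (hvc.mono Icc_subset_Ici_self) hB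
      (isMinOn_iff.2 fun t ht => hK₀min t ht.1 ht.2) (hnorestart Tmax hTmax.le le_rfl)
  have hdisp : ‖∫ s in (0 : ℝ)..K₀, v s‖ ≤ B :=
    norm_intervalIntegral_le_of_mul_integral_norm_sq_le hK₀.le (hvc.mono Icc_subset_Ici_self) hB
      (by simpa using hnorestart K₀ hK₀.le hK₀ub)
  calc ‖K₀⁻¹ • ∫ s in (0 : ℝ)..K₀, gradient F (x s)‖
      ≤ K₀⁻¹ * (‖v K₀‖ + α * ‖∫ s in (0 : ℝ)..K₀, v s‖) := by
        rw [hmean, norm_smul, Real.norm_of_nonneg (inv_nonneg.2 hK₀.le)]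
        gcongr
        refine (norm_sub_le _ _).trans_eq ?_
        rw [norm_neg, norm_smul, Real.norm_of_nonneg hα.le]
    _ ≤ (Tmax / 2)⁻¹ * (Real.sqrt 2 * B / Tmax + α * B) := by gcongr
    _ = 2 * Real.sqrt 2 * B / Tmax ^ 2 + 2 * α * B / Tmax := by field_simp

/-- Average gradient bound along a heavy-ball trajectory
without restart. -/
theorem heavy_ball_average_gradient_bound
    {d : ℕ} (hd : 1 ≤ d)
    (F : EuclideanSpace ℝ (Fin d) → ℝ) (hF : ContDiff ℝ 1 F)
    (α Tmax B : ℝ) (hα : 0 < α) (hTmax : 0 < Tmax) (hB : 0 ≤ B)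
    (x v a : ℝ → EuclideanSpace ℝ (Fin d))
    (hx : ∀ t : ℝ, 0 ≤ t → HasDerivAt x (v t) t)
    (hv : ∀ t : ℝ, 0 ≤ t → HasDerivAt v (a t) t)
    (hode : ∀ t : ℝ, 0 ≤ t → a t + α • v t + gradient F (x t) = 0)
    (hv0 : v 0 = 0)
    (hnorestart : ∀ T : ℝ, 0 ≤ T → T ≤ Tmax →
      T * ∫ t in (0 : ℝ)..T, ‖v t‖ ^ 2 ≤ B ^ 2)
    (K₀ : ℝ) (hK₀lb : Tmax / 2 ≤ K₀) (hK₀ub : K₀ ≤ Tmax)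
    (hK₀min : ∀ t : ℝ, Tmax / 2 ≤ t → t ≤ Tmax → ‖v K₀‖ ≤ ‖v t‖) :
    ‖K₀⁻¹ • ∫ s in (0 : ℝ)..K₀, gradient F (x s)‖ ≤
      2 * Real.sqrt 2 * B / Tmax ^ 2 + 2 * α * B / Tmax :=
  heavy_ball_average_gradient_bound_general F hF α Tmax B hα hTmax hB x v a hx hv hode hv0
    hnorestart K₀ hK₀lb hK₀ub hK₀min
end

section
/- (Gradient of the trajectory average versus average gradient.) Let F : ℝ^d → ℝ be twice differentiable with ρ-Lipschitz Hessian, α > 0, T_max > 0, B ≥ 0, and let x : [0,∞) → ℝ^d be twice differentiable and solve the heavy-ball ODE ẍ_t + α·ẋ_t + ∇F(x_t) = 0 for all t ≥ 0, with ẋ_0 = 0. Assume that for every T ∈ [0, T_max], T·∫₀ᵀ ‖ẋ_t‖² dt ≤ B². Let K₀ ∈ [T_max/2, T_max] be a minimizer of t ↦ ‖ẋ_t‖ over [T_max/2, T_max], and let x̂ = (1/K₀)·∫₀^{K₀} x_t dt. Then ‖∇F(x̂) − (1/K₀)·∫₀^{K₀} ∇F(x_t) dt‖ ≤ ρ·B²/16.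 -/
/-!
Let `x̂` be the average of `x` over `[0, K₀]`. Expanding `∇F` to second order around `x̂`, the
linear term averages out, so the gap is at most `ρ / 2` times the mean squared deviation
`⨍ ‖x t - x̂‖²`. The mean minimises the mean squared deviation, so it may be measured from the
midpoint `x (K₀ / 2)` instead. On each half of `[0, K₀]`, Cauchy–Schwarz gives
`‖x t - x (K₀ / 2)‖² ≤ |t - K₀ / 2| · ∫ ‖ẋ‖²` over that half, and integrating yields
`K₀² / 8 · ∫₀^K₀ ‖ẋ‖² ≤ K₀ B² / 8`.
-/

open MeasureTheory Set

section InnerProductSpace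

variable {E : Type*} [NormedAddCommGroup E] [InnerProductSpace ℝ E] [CompleteSpace E]
  {f : ℝ → E} {a b : ℝ}

theorem intervalIntegral_norm_sub_sq_eq (hab : a < b) (hf : ContinuousOn f (Icc a b)) (c : E) :
    ∫ t in a..b, ‖f t - c‖ ^ 2 =
      (∫ t in a..b, ‖f t - ⨍ s in a..b, f s‖ ^ 2) + (b - a) * ‖(⨍ s in a..b, f s) - c‖ ^ 2 := by
  set m := ⨍ s in a..b, f s with hm
  have hf' : ContinuousOn f (uIcc a b) := by rwa [uIcc_of_le hab.le]
  have hfm : IntervalIntegrable (fun t => f t - m) volume a b :=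
    (hf'.sub continuousOn_const).intervalIntegrable
  have hmean : ∫ t in a..b, (f t - m) = 0 := by
    rw [intervalIntegral.integral_sub hf'.intervalIntegrable intervalIntegrable_const,
      intervalIntegral.integral_const, hm, interval_average_eq, smul_smul,
      mul_inv_cancel₀ (sub_ne_zero.2 hab.ne'), one_smul, sub_self]
  have hcross : ∫ t in a..b, inner ℝ (m - c) (f t - m) = 0 := by
    have := (innerSL ℝ (m - c)).intervalIntegral_comp_comm hfm
    rwa [hmean, map_zero] at this
  have hexpand (t : ℝ) :
      ‖f t - c‖ ^ 2 = ‖f t - m‖ ^ 2 + 2 * inner ℝ (m - c) (f t - m) + ‖m - c‖ ^ 2 := by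
    rw [real_inner_comm, ← norm_add_sq_real, sub_add_sub_cancel]
  have hsq : IntervalIntegrable (fun t => ‖f t - m‖ ^ 2) volume a b :=
    ((hf'.sub continuousOn_const).norm.pow 2).intervalIntegrable
  have hinner : IntervalIntegrable (fun t => 2 * inner ℝ (m - c) (f t - m)) volume a b :=
    ((continuousOn_const.inner (hf'.sub continuousOn_const)).const_smul (2 : ℝ)).intervalIntegrable
  simp_rw [hexpand]
  rw [intervalIntegral.integral_add (hsq.add hinner) intervalIntegrable_const,
    intervalIntegral.integral_add hsq hinner, intervalIntegral.integral_const_mul, hcross,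
    intervalIntegral.integral_const, smul_eq_mul, mul_zero, add_zero]

theorem intervalIntegral_norm_sub_average_sq_le (hab : a < b) (hf : ContinuousOn f (Icc a b))
    (c : E) : ∫ t in a..b, ‖f t - ⨍ s in a..b, f s‖ ^ 2 ≤ ∫ t in a..b, ‖f t - c‖ ^ 2 := by
  rw [intervalIntegral_norm_sub_sq_eq hab hf c, le_add_iff_nonneg_right]
  exact mul_nonneg (sub_pos.2 hab).le (sq_nonneg _)

theorem norm_intervalIntegral_sq_le (hab : a ≤ b) (hf : ContinuousOn f (Icc a b)) :
    ‖∫ t in a..b, f t‖ ^ 2 ≤ (b - a) * ∫ t in a..b, ‖f t‖ ^ 2 := by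
  rcases hab.eq_or_lt with rfl | hab
  · simp
  have hba : 0 < b - a := sub_pos.2 hab
  have hspread : 0 ≤ ∫ t in a..b, ‖f t - ⨍ s in a..b, f s‖ ^ 2 :=
    intervalIntegral.integral_nonneg hab.le fun _ _ => sq_nonneg _
  have hscale : ‖∫ t in a..b, f t‖ ^ 2 = (b - a) * ((b - a) * ‖⨍ s in a..b, f s‖ ^ 2) := by
    rw [interval_average_eq, norm_smul, norm_inv, Real.norm_of_nonneg hba.le]
    field_simp
  have hvar := intervalIntegral_norm_sub_sq_eq hab hf 0
  simp only [sub_zero] at hvar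
  rw [hscale, hvar]
  gcongr
  exact le_add_of_nonneg_left hspread

theorem norm_sub_sq_le_of_hasDerivAt {x v : ℝ → E} (hab : a ≤ b)
    (hx : ∀ t ∈ Icc a b, HasDerivAt x (v t) t) (hv : ContinuousOn v (Icc a b)) :
    ‖x b - x a‖ ^ 2 ≤ (b - a) * ∫ t in a..b, ‖v t‖ ^ 2 := by
  have hftc : ∫ t in a..b, v t = x b - x a := by
    rw [← uIcc_of_le hab] at hx hv
    exact intervalIntegral.integral_eq_sub_of_hasDerivAt hx hv.intervalIntegrable
  rw [← hftc]
  exact norm_intervalIntegral_sq_le hab hv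

theorem intervalIntegral_norm_sub_left_sq_le {x v : ℝ → E} (hab : a ≤ b)
    (hx : ∀ t ∈ Icc a b, HasDerivAt x (v t) t) (hv : ContinuousOn v (Icc a b)) :
    ∫ t in a..b, ‖x t - x a‖ ^ 2 ≤ (b - a) ^ 2 / 2 * ∫ t in a..b, ‖v t‖ ^ 2 := by
  set S := ∫ t in a..b, ‖v t‖ ^ 2
  have hxc : ContinuousOn x (uIcc a b) := by
    rw [uIcc_of_le hab]; exact fun t ht => (hx t ht).continuousAt.continuousWithinAt
  have hvsq : IntervalIntegrable (fun t => ‖v t‖ ^ 2) volume a b := by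
    rw [← uIcc_of_le hab] at hv; exact (hv.norm.pow 2).intervalIntegrable
  have hpoint : ∀ t ∈ Icc a b, ‖x t - x a‖ ^ 2 ≤ (t - a) * S := by
    intro t ⟨hat, htb⟩
    calc ‖x t - x a‖ ^ 2 ≤ (t - a) * ∫ s in a..t, ‖v s‖ ^ 2 :=
          norm_sub_sq_le_of_hasDerivAt hat (fun s hs => hx s ⟨hs.1, hs.2.trans htb⟩)
            (hv.mono (Icc_subset_Icc_right htb))
      _ ≤ (t - a) * S := by
          refine mul_le_mul_of_nonneg_left ?_ (sub_nonneg.2 hat)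
          exact intervalIntegral.integral_mono_interval le_rfl hat htb
            (Filter.Eventually.of_forall fun _ => sq_nonneg _) hvsq
  calc ∫ t in a..b, ‖x t - x a‖ ^ 2 ≤ ∫ t in a..b, (t - a) * S :=
        intervalIntegral.integral_mono_on hab
          ((hxc.sub continuousOn_const).norm.pow 2).intervalIntegrable
          (((continuous_id.sub continuous_const).mul continuous_const).intervalIntegrable _ _)
          hpoint
    _ = (b - a) ^ 2 / 2 * S := by
        simp only [intervalIntegral.integral_mul_const,
          intervalIntegral.integral_comp_sub_right fun t => t, integral_id]
        ring

theorem intervalIntegral_norm_sub_right_sq_le {x v : ℝ → E} (hab : a ≤ b)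
    (hx : ∀ t ∈ Icc a b, HasDerivAt x (v t) t) (hv : ContinuousOn v (Icc a b)) :
    ∫ t in a..b, ‖x t - x b‖ ^ 2 ≤ (b - a) ^ 2 / 2 * ∫ t in a..b, ‖v t‖ ^ 2 := by
  have hx' : ∀ t ∈ Icc (-b) (-a), HasDerivAt (fun s => x (-s)) (-v (-t)) t := by
    intro t ht
    simpa [Function.comp_def] using
      (hx (-t) ⟨le_neg.1 ht.2, neg_le.1 ht.1⟩).scomp t (hasDerivAt_neg t)
  have hv' : ContinuousOn (fun t => -v (-t)) (Icc (-b) (-a)) := by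
    refine (hv.comp continuousOn_neg fun t ht => ?_).neg
    exact ⟨le_neg.1 ht.2, neg_le.1 ht.1⟩
  have := intervalIntegral_norm_sub_left_sq_le (neg_le_neg hab) hx' hv'
  simpa [intervalIntegral.integral_comp_neg fun t => ‖x t - x b‖ ^ 2,
    intervalIntegral.integral_comp_neg fun t => ‖v t‖ ^ 2, neg_add_eq_sub] using this

theorem intervalIntegral_norm_sub_midpoint_sq_le {x v : ℝ → E} (hab : a ≤ b)
    (hx : ∀ t ∈ Icc a b, HasDerivAt x (v t) t) (hv : ContinuousOn v (Icc a b)) :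
    ∫ t in a..b, ‖x t - x ((a + b) / 2)‖ ^ 2 ≤ (b - a) ^ 2 / 8 * ∫ t in a..b, ‖v t‖ ^ 2 := by
  set m := (a + b) / 2 with hm
  have ham : a ≤ m := by linarith
  have hmb : m ≤ b := by linarith
  have hxc : ContinuousOn x (Icc a b) := fun t ht => (hx t ht).continuousAt.continuousWithinAt
  have hint {g : ℝ → ℝ} (hg : ContinuousOn g (Icc a b)) {s t : ℝ} (hs : s ∈ Icc a b)
      (ht : t ∈ Icc a b) : IntervalIntegrable g volume s t :=
    (hg.mono (uIcc_subset_Icc hs ht)).intervalIntegrable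
  have hxsq : ContinuousOn (fun t => ‖x t - x m‖ ^ 2) (Icc a b) :=
    (hxc.sub continuousOn_const).norm.pow 2
  have hvsq : ContinuousOn (fun t => ‖v t‖ ^ 2) (Icc a b) := hv.norm.pow 2
  have hA : a ∈ Icc a b := ⟨le_rfl, hab⟩
  have hM : m ∈ Icc a b := ⟨ham, hmb⟩
  have hB : b ∈ Icc a b := ⟨hab, le_rfl⟩
  have hleft := intervalIntegral_norm_sub_right_sq_le ham
    (fun t ht => hx t ⟨ht.1, ht.2.trans hmb⟩) (hv.mono (Icc_subset_Icc_right hmb))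
  have hright := intervalIntegral_norm_sub_left_sq_le hmb
    (fun t ht => hx t ⟨ham.trans ht.1, ht.2⟩) (hv.mono (Icc_subset_Icc_left ham))
  rw [← intervalIntegral.integral_add_adjacent_intervals (hint hxsq hA hM) (hint hxsq hM hB),
    ← intervalIntegral.integral_add_adjacent_intervals (hint hvsq hA hM) (hint hvsq hM hB)]
  have hma : m - a = (b - a) / 2 := by linarith
  have hbm : b - m = (b - a) / 2 := by linarith
  rw [hma] at hleft
  rw [hbm] at hright
  linarith

end InnerProductSpace

section TaylorBound

variable {E F : Type*} [NormedAddCommGroup E] [NormedSpace ℝ E] [NormedAddCommGroup F]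
  [NormedSpace ℝ F] {g : E → F} {ρ : ℝ}

theorem norm_sub_sub_fderiv_le_of_lipschitz_fderiv (hg : Differentiable ℝ g)
    (hlip : ∀ p q, ‖fderiv ℝ g p - fderiv ℝ g q‖ ≤ ρ * ‖p - q‖) (p q : E) :
    ‖g q - g p - fderiv ℝ g p (q - p)‖ ≤ ρ / 2 * ‖q - p‖ ^ 2 := by
  set w := q - p
  set H := fderiv ℝ g
  have hψ (τ : ℝ) : HasDerivAt (fun s : ℝ => g (p + s • w) - g p - s • H p w)
      (H (p + τ • w) w - H p w) τ := by
    have hline : HasDerivAt (fun s : ℝ => p + s • w) w τ := by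
      simpa using ((hasDerivAt_id τ).smul_const w).const_add p
    have hgline := (hg (p + τ • w)).hasFDerivAt.comp_hasDerivAt τ hline
    exact (hgline.sub_const (g p)).sub (by simpa using (hasDerivAt_id τ).smul_const (H p w))
  have hbound (τ : ℝ) (hτ : 0 ≤ τ) : ‖H (p + τ • w) w - H p w‖ ≤ ρ * ‖w‖ ^ 2 * τ :=
    calc ‖H (p + τ • w) w - H p w‖ = ‖(H (p + τ • w) - H p) w‖ := rfl
      _ ≤ ‖H (p + τ • w) - H p‖ * ‖w‖ := ContinuousLinearMap.le_opNorm _ w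
      _ ≤ ρ * ‖τ • w‖ * ‖w‖ := by
          gcongr
          simpa using hlip (p + τ • w) p
      _ = ρ * ‖w‖ ^ 2 * τ := by rw [norm_smul, Real.norm_of_nonneg hτ]; ring
  have := image_norm_le_of_norm_deriv_right_le_deriv_boundary (a := 0) (b := 1)
    (B := fun τ => ρ / 2 * ‖w‖ ^ 2 * τ ^ 2) (B' := fun τ => ρ * ‖w‖ ^ 2 * τ)
    (fun τ _ => (hψ τ).continuousAt.continuousWithinAt) (fun τ _ => (hψ τ).hasDerivWithinAt)
    (by simp) (fun τ => ((hasDerivAt_pow 2 τ).const_mul (ρ / 2 * ‖w‖ ^ 2)).congr_deriv (by ring))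
    (fun τ hτ => hbound τ hτ.1) (right_mem_Icc.2 zero_le_one)
  simpa [w] using this

theorem norm_apply_average_sub_average_apply_le [CompleteSpace E] [CompleteSpace F]
    (hg : Differentiable ℝ g) (hlip : ∀ p q, ‖fderiv ℝ g p - fderiv ℝ g q‖ ≤ ρ * ‖p - q‖)
    {x : ℝ → E} {a b : ℝ} (hab : a < b) (hx : ContinuousOn x (Icc a b)) :
    ‖g (⨍ t in a..b, x t) - ⨍ t in a..b, g (x t)‖ ≤
      ρ / 2 * ⨍ t in a..b, ‖x t - ⨍ s in a..b, x s‖ ^ 2 := by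
  set m := ⨍ s in a..b, x s with hm
  set H := fderiv ℝ g m
  have hba : 0 < b - a := sub_pos.2 hab
  have hx' : ContinuousOn x (uIcc a b) := by rwa [uIcc_of_le hab.le]
  have hxi : IntervalIntegrable x volume a b := hx'.intervalIntegrable
  have hgxi : IntervalIntegrable (fun t => g (x t)) volume a b :=
    (hg.continuous.comp_continuousOn hx').intervalIntegrable
  have hlin : ∫ t in a..b, H (x t - m) = 0 := by
    rw [H.intervalIntegral_comp_comm (hxi.sub intervalIntegrable_const),
      intervalIntegral.integral_sub hxi intervalIntegrable_const, intervalIntegral.integral_const,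
      hm, interval_average_eq, smul_smul, mul_inv_cancel₀ hba.ne', one_smul, sub_self, map_zero]
  have hrem : g m - ⨍ t in a..b, g (x t) =
      -(b - a)⁻¹ • ∫ t in a..b, (g (x t) - g m - H (x t - m)) := by
    have hHi : IntervalIntegrable (fun t => H (x t - m)) volume a b :=
      (H.continuous.comp_continuousOn (hx'.sub continuousOn_const)).intervalIntegrable
    rw [intervalIntegral.integral_sub (hgxi.sub intervalIntegrable_const) hHi,
      intervalIntegral.integral_sub hgxi intervalIntegrable_const, hlin,
      intervalIntegral.integral_const, interval_average_eq, smul_sub, smul_sub, smul_smul,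
      neg_mul, inv_mul_cancel₀ hba.ne', neg_smul, neg_smul, one_smul, smul_zero, sub_zero]
    abel
  have hbound : ‖∫ t in a..b, (g (x t) - g m - H (x t - m))‖ ≤
      ∫ t in a..b, ρ / 2 * ‖x t - m‖ ^ 2 :=
    intervalIntegral.norm_integral_le_of_norm_le hab.le
      (Filter.Eventually.of_forall fun t _ =>
        norm_sub_sub_fderiv_le_of_lipschitz_fderiv hg hlip m (x t))
      (((hx'.sub continuousOn_const).norm.pow 2).const_smul (ρ / 2)).intervalIntegrable
  calc ‖g m - ⨍ t in a..b, g (x t)‖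
      = (b - a)⁻¹ * ‖∫ t in a..b, (g (x t) - g m - H (x t - m))‖ := by
        rw [hrem, norm_smul, norm_neg, norm_inv, Real.norm_of_nonneg hba.le]
    _ ≤ (b - a)⁻¹ * ∫ t in a..b, ρ / 2 * ‖x t - m‖ ^ 2 := by gcongr
    _ = ρ / 2 * ⨍ t in a..b, ‖x t - m‖ ^ 2 := by
        rw [interval_average_eq, intervalIntegral.integral_const_mul, smul_eq_mul]
        ring

end TaylorBound

theorem nonneg_of_norm_sub_le_mul_norm_sub {E G : Type*} [NormedAddCommGroup E] [Nontrivial E]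
    [NormedAddCommGroup G] {f : E → G} {ρ : ℝ} (h : ∀ p q, ‖f p - f q‖ ≤ ρ * ‖p - q‖) :
    0 ≤ ρ := by
  obtain ⟨p, hp⟩ := exists_ne (0 : E)
  exact nonneg_of_mul_nonneg_left ((norm_nonneg _).trans (h p 0)) (by simpa using hp)

theorem heavy_ball_gradient_of_average_vs_average_gradient_general
    {d : ℕ} (hd : 1 ≤ d)
    (F : EuclideanSpace ℝ (Fin d) → ℝ) (ρ : ℝ)
    (hFd2 : Differentiable ℝ (gradient F))
    (hlipHess : ∀ a b : EuclideanSpace ℝ (Fin d),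
      ‖fderiv ℝ (gradient F) a - fderiv ℝ (gradient F) b‖ ≤ ρ * ‖a - b‖)
    (Tmax B : ℝ) (hTmax : 0 < Tmax)
    (x v a : ℝ → EuclideanSpace ℝ (Fin d))
    (hx : ∀ t : ℝ, 0 ≤ t → HasDerivAt x (v t) t)
    (hv : ∀ t : ℝ, 0 ≤ t → HasDerivAt v (a t) t)
    (hnorestart : ∀ T : ℝ, 0 ≤ T → T ≤ Tmax →
      T * ∫ t in (0 : ℝ)..T, ‖v t‖ ^ 2 ≤ B ^ 2)
    (K₀ : ℝ) (hK₀lb : Tmax / 2 ≤ K₀) (hK₀ub : K₀ ≤ Tmax)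
    (xhat : EuclideanSpace ℝ (Fin d))
    (hxhat : xhat = K₀⁻¹ • ∫ t in (0 : ℝ)..K₀, x t) :
    ‖gradient F xhat - K₀⁻¹ • ∫ t in (0 : ℝ)..K₀, gradient F (x t)‖ ≤
      ρ * B ^ 2 / 16 := by
  have hK : 0 < K₀ := by linarith
  have hρ : 0 ≤ ρ := by
    have : Nonempty (Fin d) := ⟨⟨0, hd⟩⟩
    exact nonneg_of_norm_sub_le_mul_norm_sub hlipHess
  have hxv : ∀ t ∈ Icc 0 K₀, HasDerivAt x (v t) t := fun t ht => hx t ht.1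
  have hxc : ContinuousOn x (Icc 0 K₀) := fun t ht => (hx t ht.1).continuousAt.continuousWithinAt
  have hvc : ContinuousOn v (Icc 0 K₀) := fun t ht => (hv t ht.1).continuousAt.continuousWithinAt
  have hgap := norm_apply_average_sub_average_apply_le hFd2 hlipHess hK hxc
  have hspread : ∫ t in 0..K₀, ‖x t - ⨍ s in 0..K₀, x s‖ ^ 2 ≤
      K₀ ^ 2 / 8 * ∫ t in 0..K₀, ‖v t‖ ^ 2 := by
    have hmid := intervalIntegral_norm_sub_midpoint_sq_le hK.le hxv hvc
    rw [zero_add, sub_zero] at hmid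
    exact (intervalIntegral_norm_sub_average_sq_le hK hxc _).trans hmid
  have hkinetic := hnorestart K₀ hK.le hK₀ub
  simp only [interval_average_eq, sub_zero, ← hxhat, smul_eq_mul] at hgap hspread
  calc _ ≤ ρ / 2 * (K₀⁻¹ * ∫ t in 0..K₀, ‖x t - xhat‖ ^ 2) := hgap
    _ ≤ ρ / 2 * (K₀⁻¹ * (K₀ ^ 2 / 8 * ∫ t in 0..K₀, ‖v t‖ ^ 2)) := by gcongr
    _ = ρ / 16 * (K₀ * ∫ t in 0..K₀, ‖v t‖ ^ 2) := by field_simp; ring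
    _ ≤ ρ * B ^ 2 / 16 := by nlinarith

/-- Gradient of the trajectory average versus the average
gradient, along a heavy-ball trajectory without restart, for a function with
`ρ`-Lipschitz Hessian. -/
theorem heavy_ball_gradient_of_average_vs_average_gradient
    {d : ℕ} (hd : 1 ≤ d)
    (F : EuclideanSpace ℝ (Fin d) → ℝ) (ρ : ℝ)
    (hFd : Differentiable ℝ F) (hFd2 : Differentiable ℝ (gradient F))
    (hlipHess : ∀ a b : EuclideanSpace ℝ (Fin d),
      ‖fderiv ℝ (gradient F) a - fderiv ℝ (gradient F) b‖ ≤ ρ * ‖a - b‖)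
    (α Tmax B : ℝ) (hα : 0 < α) (hTmax : 0 < Tmax) (hB : 0 ≤ B)
    (x v a : ℝ → EuclideanSpace ℝ (Fin d))
    (hx : ∀ t : ℝ, 0 ≤ t → HasDerivAt x (v t) t)
    (hv : ∀ t : ℝ, 0 ≤ t → HasDerivAt v (a t) t)
    (hode : ∀ t : ℝ, 0 ≤ t → a t + α • v t + gradient F (x t) = 0)
    (hv0 : v 0 = 0)
    (hnorestart : ∀ T : ℝ, 0 ≤ T → T ≤ Tmax →
      T * ∫ t in (0 : ℝ)..T, ‖v t‖ ^ 2 ≤ B ^ 2)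
    (K₀ : ℝ) (hK₀lb : Tmax / 2 ≤ K₀) (hK₀ub : K₀ ≤ Tmax)
    (hK₀min : ∀ t : ℝ, Tmax / 2 ≤ t → t ≤ Tmax → ‖v K₀‖ ≤ ‖v t‖)
    (xhat : EuclideanSpace ℝ (Fin d))
    (hxhat : xhat = K₀⁻¹ • ∫ t in (0 : ℝ)..K₀, x t) :
    ‖gradient F xhat - K₀⁻¹ • ∫ t in (0 : ℝ)..K₀, gradient F (x t)‖ ≤
      ρ * B ^ 2 / 16 :=
  heavy_ball_gradient_of_average_vs_average_gradient_general hd F ρ hFd2 hlipHess Tmax B hTmax x v a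
    hx hv hnorestart K₀ hK₀lb hK₀ub xhat hxhat
end

section
/- (Bound on the number of restarts of continuous RISP.) Let F : ℝ^d → ℝ be continuously differentiable and bounded below by m ∈ ℝ, let ε, ρ > 0, and set α = (ε·ρ)^{1/4}, T_max = (ε·ρ)^{−1/4}, B = √(ε/ρ). Let K ≥ 1 be an integer and, for k = 1, …, K, let x_k : [0,∞) → ℝ^d be twice differentiable curves and 0 < T_k ≤ T_max be times such that: each x_k solves the heavy-ball ODE ẍ_{k,t} + α·ẋ_{k,t} + ∇F(x_{k,t}) = 0 for all t ≥ 0 with ẋ_{k,0} = 0; the epochs are concatenated, i.e. x_{k+1,0} = x_{k,T_k} for k = 1,…,K−1; and each restart time satisfies T_k·∫₀^{T_k} ‖ẋ_{k,t}‖² dt = B². Then K ≤ (F(x_{1,0}) − m)·√ρ·ε^{−3/2}. -/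
/-!
Along each epoch the energy `F x + ‖ẋ‖² / 2` decreases at rate `α ‖ẋ‖²`, and it starts at
`F (x_{k,0})` because the velocity is reset to zero. Hence epoch `k` lowers `F` by at least
`α ∫ ‖ẋ‖² = α B² / T_k ≥ α B² / T_max = ε^{3/2} / √ρ`. Since the epochs are chained, `K` such
drops fit between `F (x_{1,0})` and the lower bound `m`.
-/

open Real InnerProductSpace

section HeavyBall

variable {E : Type*} [NormedAddCommGroup E] [InnerProductSpace ℝ E] [CompleteSpace E]
  {F : E → ℝ} {α : ℝ} {x v a : ℝ → E}

theorem HasGradientAt.comp_hasDerivAt_real {g : E} {x' : E} {t : ℝ}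
    (hF : HasGradientAt F g (x t)) (hx : HasDerivAt x x' t) :
    HasDerivAt (fun s => F (x s)) ⟪g, x'⟫_ℝ t := by
  have h := hF.hasFDerivAt.comp_hasDerivAt t hx
  simp only [InnerProductSpace.toDual_apply_apply] at h
  exact h

theorem hasDerivAt_heavyBall_energy {t : ℝ} (hF : DifferentiableAt ℝ F (x t))
    (hx : HasDerivAt x (v t) t) (hv : HasDerivAt v (a t) t)
    (hode : a t + α • v t + gradient F (x t) = 0) :
    HasDerivAt (fun s => F (x s) + ‖v s‖ ^ 2 / 2) (-(α * ‖v t‖ ^ 2)) t := by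
  have hgrad : gradient F (x t) = -(a t + α • v t) := (neg_eq_of_add_eq_zero_right hode).symm
  refine ((hF.hasGradientAt.comp_hasDerivAt_real hx).add (hv.norm_sq.div_const 2)).congr_deriv ?_
  rw [hgrad, inner_neg_left, inner_add_left, real_inner_smul_left, real_inner_self_eq_norm_sq,
    real_inner_comm]
  ring

theorem heavyBall_energy_identity (hF : Differentiable ℝ F) {T : ℝ} (hT : 0 ≤ T)
    (hx : ∀ t, 0 ≤ t → HasDerivAt x (v t) t) (hv : ∀ t, 0 ≤ t → HasDerivAt v (a t) t)
    (hode : ∀ t, 0 ≤ t → a t + α • v t + gradient F (x t) = 0) :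
    F (x T) + ‖v T‖ ^ 2 / 2 + α * ∫ t in 0..T, ‖v t‖ ^ 2 = F (x 0) + ‖v 0‖ ^ 2 / 2 := by
  have hnonneg : ∀ t ∈ Set.uIcc 0 T, 0 ≤ t := fun t ht => (Set.uIcc_of_le hT ▸ ht).1
  have hcont : ContinuousOn v (Set.uIcc 0 T) := fun t ht =>
    (hv t (hnonneg t ht)).continuousAt.continuousWithinAt
  have hftc := intervalIntegral.integral_eq_sub_of_hasDerivAt
    (fun t ht => hasDerivAt_heavyBall_energy (hF _) (hx t (hnonneg t ht)) (hv t (hnonneg t ht))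
      (hode t (hnonneg t ht)))
    ((hcont.norm.pow 2).const_smul α).neg.intervalIntegrable
  rw [intervalIntegral.integral_neg, intervalIntegral.integral_const_mul] at hftc
  linarith

theorem heavyBall_descent_of_restart (hF : Differentiable ℝ F) (hα : 0 ≤ α) {T Tmax B : ℝ}
    (hT : 0 < T) (hTmax : T ≤ Tmax)
    (hx : ∀ t, 0 ≤ t → HasDerivAt x (v t) t) (hv : ∀ t, 0 ≤ t → HasDerivAt v (a t) t)
    (hode : ∀ t, 0 ≤ t → a t + α • v t + gradient F (x t) = 0) (hv0 : v 0 = 0)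
    (hrestart : T * ∫ t in 0..T, ‖v t‖ ^ 2 = B ^ 2) :
    F (x T) + α * B ^ 2 / Tmax ≤ F (x 0) := by
  have henergy := heavyBall_energy_identity hF hT.le hx hv hode
  have hint : ∫ t in 0..T, ‖v t‖ ^ 2 = B ^ 2 / T := by
    rw [eq_div_iff hT.ne', mul_comm, hrestart]
  have hdrop : B ^ 2 / Tmax ≤ B ^ 2 / T := div_le_div_of_nonneg_left (sq_nonneg B) hT hTmax
  rw [hv0, hint, norm_zero] at henergy
  rw [mul_div_assoc]
  linarith [mul_le_mul_of_nonneg_left hdrop hα, sq_nonneg ‖v T‖]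

end HeavyBall

theorem natCast_mul_le_sub_of_chain {K : ℕ} {f g : ℕ → ℝ} {c m : ℝ}
    (hstep : ∀ i < K, g i + c ≤ f i) (hchain : ∀ i, i + 1 < K → f (i + 1) = g i)
    (hf0 : m ≤ f 0) (hg : ∀ i < K, m ≤ g i) :
    K * c ≤ f 0 - m := by
  have hpartial : ∀ i < K, g i + (i + 1) * c ≤ f 0 := by
    intro i
    induction i with
    | zero => intro h; simpa using hstep 0 h
    | succ n ih =>
      intro hn
      have := hstep (n + 1) hn
      rw [hchain n hn] at this
      push_cast
      linarith [ih (by omega)]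
  rcases K with _ | n
  · simpa using hf0
  · push_cast
    linarith [hpartial n n.lt_succ_self, hg n n.lt_succ_self]

/-- The per-epoch drop `α B² / T_max` equals `ε^{3/2} / √ρ`. -/
theorem rpow_quarter_mul_div_rpow_neg_quarter_mul {ε ρ : ℝ} (hε : 0 < ε) (hρ : 0 < ρ) :
    (ε * ρ) ^ ((1 : ℝ) / 4) * (ε / ρ) / (ε * ρ) ^ (-(1 : ℝ) / 4) * (√ρ * ε ^ (-(3 : ℝ) / 2))
      = 1 := by
  have hsqrt : (ε * ρ) ^ ((1 : ℝ) / 4) / (ε * ρ) ^ (-(1 : ℝ) / 4) = √ε * √ρ := by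
    rw [← rpow_sub (mul_pos hε hρ), ← sqrt_mul hε.le, sqrt_eq_rpow]
    norm_num
  have hε32 : ε ^ (-(3 : ℝ) / 2) * √ε = ε⁻¹ := by
    rw [sqrt_eq_rpow, ← rpow_add hε, ← rpow_neg_one]
    norm_num
  have hρρ : √ρ * √ρ = ρ := mul_self_sqrt hρ.le
  calc _ = (ε ^ (-(3 : ℝ) / 2) * √ε) * ε * ((√ρ * √ρ) / ρ) := by
        rw [mul_div_right_comm, hsqrt]; ring
    _ = 1 := by rw [hε32, hρρ, div_self hρ.ne', inv_mul_cancel₀ hε.ne', one_mul]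

theorem continuous_risp_restart_count_bound_general
    {d : ℕ}
    (F : EuclideanSpace ℝ (Fin d) → ℝ) (hF : ContDiff ℝ 1 F)
    (m : ℝ) (hm : ∀ y, m ≤ F y)
    (ε ρ : ℝ) (hε : 0 < ε) (hρ : 0 < ρ)
    (α Tmax B : ℝ)
    (hα : α = (ε * ρ) ^ ((1 : ℝ) / 4))
    (hTmax : Tmax = (ε * ρ) ^ (-(1 : ℝ) / 4))
    (hB : B = Real.sqrt (ε / ρ))
    (K : ℕ)
    (x v a : ℕ → ℝ → EuclideanSpace ℝ (Fin d))
    (T : ℕ → ℝ)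
    (hx : ∀ i < K, ∀ t : ℝ, 0 ≤ t → HasDerivAt (x i) (v i t) t)
    (hv : ∀ i < K, ∀ t : ℝ, 0 ≤ t → HasDerivAt (v i) (a i t) t)
    (hode : ∀ i < K, ∀ t : ℝ, 0 ≤ t →
      a i t + α • v i t + gradient F (x i t) = 0)
    (hv0 : ∀ i < K, v i 0 = 0)
    (hT : ∀ i < K, 0 < T i ∧ T i ≤ Tmax)
    (hchain : ∀ i, i + 1 < K → x (i + 1) 0 = x i (T i))
    (hrestart : ∀ i < K, T i * ∫ t in (0 : ℝ)..(T i), ‖v i t‖ ^ 2 = B ^ 2) :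
    (K : ℝ) ≤ (F (x 0 0) - m) * Real.sqrt ρ * ε ^ (-(3 : ℝ) / 2) := by
  have hα0 : 0 ≤ α := hα ▸ rpow_nonneg (mul_pos hε hρ).le _
  have hdescent : K * (α * B ^ 2 / Tmax) ≤ F (x 0 0) - m :=
    natCast_mul_le_sub_of_chain (f := fun i => F (x i 0)) (g := fun i => F (x i (T i)))
      (fun i hi => heavyBall_descent_of_restart (hF.differentiable one_ne_zero) hα0
        (hT i hi).1 (hT i hi).2 (hx i hi) (hv i hi) (hode i hi) (hv0 i hi) (hrestart i hi))
      (fun i hi => congrArg F (hchain i hi)) (hm _) (fun _ _ => hm _)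
  have hscale : α * B ^ 2 / Tmax * (√ρ * ε ^ (-(3 : ℝ) / 2)) = 1 := by
    rw [hα, hTmax, hB, sq_sqrt (div_pos hε hρ).le]
    exact rpow_quarter_mul_div_rpow_neg_quarter_mul hε hρ
  calc (K : ℝ) = K * (α * B ^ 2 / Tmax) * (√ρ * ε ^ (-(3 : ℝ) / 2)) := by
        rw [mul_assoc, hscale, mul_one]
    _ ≤ (F (x 0 0) - m) * (√ρ * ε ^ (-(3 : ℝ) / 2)) :=
        mul_le_mul_of_nonneg_right hdescent (by positivity)
    _ = (F (x 0 0) - m) * √ρ * ε ^ (-(3 : ℝ) / 2) := (mul_assoc _ _ _).symm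

/-- Bound on the number of restarts of continuous RISP.
The `K` epochs are indexed by `i ∈ {0, …, K-1}`; epoch `i` is the curve
`x i` with first derivative `v i` and second derivative `a i`, solving the
heavy-ball ODE with zero initial velocity, started at the endpoint of the
previous epoch, and stopped at the restart time `T i`. -/
theorem continuous_risp_restart_count_bound
    {d : ℕ} (hd : 1 ≤ d)
    (F : EuclideanSpace ℝ (Fin d) → ℝ) (hF : ContDiff ℝ 1 F)
    (m : ℝ) (hm : ∀ y, m ≤ F y)
    (ε ρ : ℝ) (hε : 0 < ε) (hρ : 0 < ρ)
    (α Tmax B : ℝ)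
    (hα : α = (ε * ρ) ^ ((1 : ℝ) / 4))
    (hTmax : Tmax = (ε * ρ) ^ (-(1 : ℝ) / 4))
    (hB : B = Real.sqrt (ε / ρ))
    (K : ℕ) (hK : 1 ≤ K)
    (x v a : ℕ → ℝ → EuclideanSpace ℝ (Fin d))
    (T : ℕ → ℝ)
    (hx : ∀ i < K, ∀ t : ℝ, 0 ≤ t → HasDerivAt (x i) (v i t) t)
    (hv : ∀ i < K, ∀ t : ℝ, 0 ≤ t → HasDerivAt (v i) (a i t) t)
    (hode : ∀ i < K, ∀ t : ℝ, 0 ≤ t →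
      a i t + α • v i t + gradient F (x i t) = 0)
    (hv0 : ∀ i < K, v i 0 = 0)
    (hT : ∀ i < K, 0 < T i ∧ T i ≤ Tmax)
    (hchain : ∀ i, i + 1 < K → x (i + 1) 0 = x i (T i))
    (hrestart : ∀ i < K, T i * ∫ t in (0 : ℝ)..(T i), ‖v i t‖ ^ 2 = B ^ 2) :
    (K : ℝ) ≤ (F (x 0 0) - m) * Real.sqrt ρ * ε ^ (-(3 : ℝ) / 2) :=
  continuous_risp_restart_count_bound_general F hF m hm ε ρ hε hρ α Tmax B hα hTmax hB K x v a T hx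
    hv hode hv0 hT hchain hrestart
end
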